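/- arXiv:2204.09250 — 3 statements merged into one kernel-verified Lean document; each statement's English description precedes it below -/
import Mathlib

section
/- Let β>0, λ>0, 1/2 < α < 1, and let τ satisfy f(0) ≤ τ ≤ f((2α-1)/α), where f(γ) = (2β²/λ)·(1-γ)/(1-αγ)². Define φ̄(τ) and φ_(τ) as the two roots (αλτ - β² ± β√(β² - 2(1-α)αλτ))/(α²λτ) (with + for φ̄ and − for φ_). Then φ_(τ) ≤ (2α-1)/α ≤ φ̄(τ). -/
theorem stmt_3 (α β lam τ : ℝ) (hβ : 0 < β) (hlam : 0 < lam) (hα : 1/2 < α) (hα1 : α < 1)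
    (hτ0 : 2*β^2/lam ≤ τ) (hτ1 : τ ≤ β^2/(2*α*(1-α)*lam)) :
    (α*lam*τ - β^2 - β*Real.sqrt (β^2 - 2*(1-α)*α*lam*τ))/(α^2*lam*τ) ≤ (2*α-1)/α ∧
    (2*α-1)/α ≤ (α*lam*τ - β^2 + β*Real.sqrt (β^2 - 2*(1-α)*α*lam*τ))/(α^2*lam*τ) := by
  have hα0 : 0 < α := by linarith
  have h1α : 0 < 1 - α := by linarith
  have hτ : 0 < τ := lt_of_lt_of_le (by positivity) hτ0
  have hden : 0 < 2*α*(1-α)*lam := by positivity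
  have hD : 0 ≤ β^2 - 2*(1-α)*α*lam*τ := by
    have := (le_div_iff₀ hden).mp hτ1
    nlinarith
  set s := Real.sqrt (β^2 - 2*(1-α)*α*lam*τ) with hs
  have hs0 : 0 ≤ s := Real.sqrt_nonneg _
  have hs2 : s^2 = β^2 - 2*(1-α)*α*lam*τ := Real.sq_sqrt hD
  have hsβ : s ≤ β := by
    rw [hs]
    calc Real.sqrt (β^2 - 2*(1-α)*α*lam*τ) ≤ Real.sqrt (β^2) :=
          Real.sqrt_le_sqrt (by nlinarith)
      _ = β := Real.sqrt_sq hβ.le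
  have hd2 : 0 < α^2*lam*τ := by positivity
  constructor
  · rw [div_le_div_iff₀ hd2 hα0]
    nlinarith [mul_nonneg hs0 (sub_nonneg.mpr hsβ)]
  · rw [div_le_div_iff₀ hα0 hd2]
    nlinarith [mul_nonneg hs0 (sub_nonneg.mpr hsβ)]
end

section
/- Let α < 1, α ≠ 0, β > 0, λ > 0, γ ∈ (0,1) with (2-γ)α ≠ 1. Suppose the flexible and rigid total-information functions agree at τ = f(γ): i.e., τ + ψ_c(τ) = τ/(1-γ) where f(γ) = (2β²/λ)(1-γ)/(1-αγ)². Then the difference of derivatives satisfies (α·(1/f'(γ))/(1-αγ) + (1-γ)/(2(1-α)f(γ))) · α = λα(αγ-1)³/(4(1-α)β²(1-(2-γ)α)). Consequently, if 1-(2-γ)α > 0 and 0 < α < 1 this quantity is negative (flexible crowding-out larger), and if α < 0 it is positive. -/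
/-!
Differentiating `f(g) = k (1 - g) / (1 - α g)²` gives `f'(γ) = k ((2 - γ) α - 1) / (1 - α γ)³`.
Both crowding-out terms are then multiples of `(1 - α γ)² / k`, and their coefficients add up to
`(1 - α γ) / (2 (1 - α) ((2 - γ) α - 1))`, so the difference is a cube of `α γ - 1` over a
denominator whose sign is that of `1 - (2 - γ) α`.
-/

lemma hasDerivAt_mul_one_sub_div_one_sub_mul_sq {k a x : ℝ} (hx : 1 - a * x ≠ 0) :
    HasDerivAt (fun g : ℝ => k * (1 - g) / (1 - a * g) ^ 2)
      (k * ((2 - x) * a - 1) / (1 - a * x) ^ 3) x := by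
  have hnum : HasDerivAt (fun g : ℝ => k * (1 - g)) (-k) x := by
    simpa using ((hasDerivAt_id x).const_sub 1).const_mul k
  have hden : HasDerivAt (fun g : ℝ => (1 - a * g) ^ 2) (2 * (1 - a * x) * (-a)) x := by
    simpa using (((hasDerivAt_id x).const_mul a).const_sub 1).fun_pow 2
  refine (hnum.div hden (pow_ne_zero 2 hx)).congr_deriv ?_
  field_simp
  ring

lemma crowdingOut_difference_eq {k α γ : ℝ} (hk : k ≠ 0) (hα : α ≠ 1) (hγ : γ ≠ 1)
    (hne : (2 - γ) * α ≠ 1) :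
    α * ((1 / (k * ((2 - γ) * α - 1) / (1 - α * γ) ^ 3)) / (1 - α * γ)
        + (1 - γ) / (2 * (1 - α) * (k * (1 - γ) / (1 - α * γ) ^ 2)))
      = α * (1 - α * γ) ^ 3 / (2 * k * (1 - α) * ((2 - γ) * α - 1)) := by
  have hd : (2 - γ) * α - 1 ≠ 0 := sub_ne_zero.mpr hne
  have hα' : 1 - α ≠ 0 := sub_ne_zero.mpr hα.symm
  have hγ' : 1 - γ ≠ 0 := sub_ne_zero.mpr hγ.symm
  have flexible : (1 / (k * ((2 - γ) * α - 1) / (1 - α * γ) ^ 3)) / (1 - α * γ)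
      = (1 - α * γ) ^ 2 / (k * ((2 - γ) * α - 1)) := by
    field_simp
  have rigid : (1 - γ) / (2 * (1 - α) * (k * (1 - γ) / (1 - α * γ) ^ 2))
      = (1 - α * γ) ^ 2 / (2 * (1 - α) * k) := by
    field_simp
  rw [flexible, rigid, div_add_div _ _ (by positivity) (by positivity), mul_div_assoc]
  congr 1
  rw [div_eq_div_iff (by positivity) (by positivity)]
  ring

theorem stmt_18_general (α β lam γ fd : ℝ) (hα : α < 1) (hβ : 0 < β)
    (hlam : 0 < lam)
    (hγ : γ ∈ Set.Ioo (0:ℝ) 1) (hne : (2-γ)*α ≠ 1)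
    (hfd : HasDerivAt (fun g : ℝ => (2*β^2/lam)*(1-g)/(1-α*g)^2) fd γ) :
    α * ((1/fd)/(1-α*γ) + (1-γ)/(2*(1-α)*((2*β^2/lam)*(1-γ)/(1-α*γ)^2)))
      = lam*α*(α*γ-1)^3/(4*(1-α)*β^2*(1-(2-γ)*α)) ∧
    (0 < α → 0 < 1-(2-γ)*α →
      α * ((1/fd)/(1-α*γ) + (1-γ)/(2*(1-α)*((2*β^2/lam)*(1-γ)/(1-α*γ)^2))) < 0) ∧
    (α < 0 →
      0 < α * ((1/fd)/(1-α*γ) + (1-γ)/(2*(1-α)*((2*β^2/lam)*(1-γ)/(1-α*γ)^2)))) := by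
  obtain ⟨hγ0, hγ1⟩ := hγ
  have hαγ : α * γ < 1 := by nlinarith
  have hcube : (α * γ - 1) ^ 3 < 0 := Odd.pow_neg (by decide) (by linarith)
  have hne' : (2 - γ) * α - 1 ≠ 0 := sub_ne_zero.mpr hne
  have hne'' : 1 - (2 - γ) * α ≠ 0 := fun h => hne' (by linarith)
  have hα' : 1 - α ≠ 0 := by linarith
  have key : α * ((1/fd)/(1-α*γ) + (1-γ)/(2*(1-α)*((2*β^2/lam)*(1-γ)/(1-α*γ)^2)))
      = lam*α*(α*γ-1)^3/(4*(1-α)*β^2*(1-(2-γ)*α)) := by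
    rw [hfd.unique (hasDerivAt_mul_one_sub_div_one_sub_mul_sq (by linarith)),
      crowdingOut_difference_eq (by positivity) hα.ne hγ1.ne hne,
      div_eq_div_iff (by positivity) (by positivity)]
    field_simp
    ring
  refine ⟨key, fun hαpos hpos => ?_, fun hαneg => ?_⟩
  · rw [key]
    refine div_neg_of_neg_of_pos ?_ (by have := sub_pos.mpr hα; positivity)
    nlinarith [mul_pos hlam hαpos]
  · have hpos : 0 < 1 - (2 - γ) * α := by nlinarith
    rw [key]
    refine div_pos ?_ (by have := sub_pos.mpr hα; positivity)
    nlinarith [mul_pos hlam (neg_pos.mpr hαneg)]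

theorem stmt_18 (α β lam c γ fd : ℝ) (hα : α < 1) (hα0 : α ≠ 0) (hβ : 0 < β)
    (hlam : 0 < lam) (hc : 0 < c)
    (hγ : γ ∈ Set.Ioo (0:ℝ) 1) (hne : (2-γ)*α ≠ 1)
    (hfd : HasDerivAt (fun g : ℝ => (2*β^2/lam)*(1-g)/(1-α*g)^2) fd γ)
    (hagree : (2*β^2/lam)*(1-γ)/(1-α*γ)^2
        + (β/Real.sqrt c - (2*β^2/lam)*(1-γ)/(1-α*γ)^2)/(1-α)
      = ((2*β^2/lam)*(1-γ)/(1-α*γ)^2)/(1-γ)) :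
    α * ((1/fd)/(1-α*γ) + (1-γ)/(2*(1-α)*((2*β^2/lam)*(1-γ)/(1-α*γ)^2)))
      = lam*α*(α*γ-1)^3/(4*(1-α)*β^2*(1-(2-γ)*α)) ∧
    (0 < α → 0 < 1-(2-γ)*α →
      α * ((1/fd)/(1-α*γ) + (1-γ)/(2*(1-α)*((2*β^2/lam)*(1-γ)/(1-α*γ)^2))) < 0) ∧
    (α < 0 →
      0 < α * ((1/fd)/(1-α*γ) + (1-γ)/(2*(1-α)*((2*β^2/lam)*(1-γ)/(1-α*γ)^2)))) :=
  stmt_18_general α β lam γ fd hα hβ hlam hγ hne hfd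
end

section
/- Let x be a normally distributed random variable with mean x̄ and variance σ², and consider maximizing over jointly Gaussian signals y with E[x|y] = y the objective -E[(x-y)²] - λ·I(x;y), where λ > 0 and I is mutual information. Parametrizing y by its variance v ∈ [0, σ²), the objective equals -(σ² - v) + (λ/2)·log(1 - v/σ²). If λ/2 < σ², the unique maximizer is v* = σ² - λ/2, giving residual variance E[(x-y)²] = λ/2 and mutual information (1/2)log(2σ²/λ); if λ/2 ≥ σ², the maximizer is v* = 0. -/
theorem stmt_19 (σ2 lam : ℝ) (hσ : 0 < σ2) (hlam : 0 < lam) :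
    let g : ℝ → ℝ := fun v => -(σ2 - v) + (lam/2)*Real.log (1 - v/σ2)
    (lam/2 < σ2 →
      (σ2 - lam/2) ∈ Set.Ico (0:ℝ) σ2 ∧
      (∀ v ∈ Set.Ico (0:ℝ) σ2, v ≠ σ2 - lam/2 → g v < g (σ2 - lam/2)) ∧
      σ2 - (σ2 - lam/2) = lam/2 ∧
      -(1/2)*Real.log (1 - (σ2 - lam/2)/σ2) = (1/2)*Real.log (2*σ2/lam)) ∧
    (σ2 ≤ lam/2 → ∀ v ∈ Set.Ioo (0:ℝ) σ2, g v < g 0) := by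
  intro g
  have hσ' : σ2 ≠ 0 := hσ.ne'
  have hlam' : lam ≠ 0 := hlam.ne'
  have h1 : 1 - (σ2 - lam/2)/σ2 = lam/(2*σ2) := by field_simp; ring
  constructor
  · intro h
    refine ⟨⟨by linarith, by linarith⟩, ?_, by ring, ?_⟩
    · intro v hv hne
      have ht : 0 < 1 - v/σ2 := by
        have : v/σ2 < 1 := (div_lt_one hσ).mpr hv.2
        linarith
      have hts : (1 - v/σ2) * (2*σ2/lam) ≠ 1 := by
        intro hc
        apply hne
        field_simp at hc
        nlinarith
      have hlog : Real.log ((1 - v/σ2) * (2*σ2/lam)) <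
          (1 - v/σ2) * (2*σ2/lam) - 1 :=
        Real.log_lt_sub_one_of_pos (by positivity) hts
      rw [Real.log_mul (by positivity) (by positivity)] at hlog
      have h2 : Real.log (2*σ2/lam) = - Real.log (lam/(2*σ2)) := by
        rw [← Real.log_inv]; congr 1; field_simp
      rw [h2] at hlog
      have harith : (1 - v/σ2) * (2*σ2/lam) = (σ2 - v) * (2/lam) := by
        field_simp
      rw [harith] at hlog
      simp only [g, h1]
      have hmul := mul_lt_mul_of_pos_left hlog (by positivity : (0:ℝ) < lam/2)
      have : (lam/2) * ((σ2 - v) * (2/lam) - 1) = (σ2 - v) - lam/2 := by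
        field_simp
      rw [this] at hmul
      linarith [hmul]
    · rw [h1]
      have h2 : Real.log (2*σ2/lam) = - Real.log (lam/(2*σ2)) := by
        rw [← Real.log_inv]; congr 1; field_simp
      rw [h2]; ring
  · intro h v hv
    have ht : 0 < 1 - v/σ2 := by
      have : v/σ2 < 1 := (div_lt_one hσ).mpr hv.2
      linarith
    have htn : 1 - v/σ2 ≠ 1 := by
      have : 0 < v/σ2 := div_pos hv.1 hσ
      linarith
    have hlog := Real.log_lt_sub_one_of_pos ht htn
    have hlogneg : Real.log (1 - v/σ2) < 0 := by
      apply Real.log_neg ht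
      have : 0 < v/σ2 := div_pos hv.1 hσ
      linarith
    simp only [g, zero_div, sub_zero, Real.log_one, mul_zero, add_zero]
    -- goal: -(σ2 - v) + lam/2 * log (1 - v/σ2) < -σ2
    have hv2 : 0 < v/σ2 := div_pos hv.1 hσ
    have key : (lam/2) * Real.log (1 - v/σ2) ≤ σ2 * Real.log (1 - v/σ2) := by
      apply mul_le_mul_of_nonpos_right h hlogneg.le
    have key2 : σ2 * Real.log (1 - v/σ2) < σ2 * (-(v/σ2)) := by
      apply mul_lt_mul_of_pos_left _ hσ
      linarith
    have : σ2 * (-(v/σ2)) = -v := by field_simp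
    linarith [key, key2, this.symm ▸ key2]
end
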